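/- Let G be a symmetric n×n integer matrix with det G ≠ 0, and set β(x,y) = xᵀGy and β(x) = xᵀGx/2. Let χ : ℤⁿ × ℤⁿ → ℂˣ be a homomorphism from the additive group ℤⁿ × ℤⁿ to the multiplicative group of nonzero complex numbers. Then χ satisfies χ(x,y) = χ(ax+cy, bx+dy) · e(ab·β(x) + cd·β(y)) for all x, y ∈ ℤⁿ and all matrices [[a,b],[c,d]] ∈ SL(2,ℤ) if and only if χ(x,y) = e(β(x+y)) = exp(πi·(x+y)ᵀG(x+y)) for all x, y ∈ ℤⁿ. -/

import Mathlib

/-!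
Since `exp (π i m) = (-1) ^ m`, only the parity of `xᵀ G x` matters, and for symmetric `G` the map
`x ↦ (-1) ^ (xᵀ G x)` is a character `ψ` of `ℤⁿ` of order dividing two. Applying the
compatibility to `[[1,1],[0,1]]` and `[[0,-1],[1,0]]` forces `χ (x, 0) = χ (0, x) = ψ x`, hence
`χ (x, y) = ψ x ψ y = ψ (x + y)`. Conversely, for `χ (x, y) = ψ (x + y)` the compatibility reduces
to the parities of `(a + b)² + ab` and `(c + d)² + cd`, which are odd because the rows of a matrix
in `SL(2, ℤ)` are coprime.
-/

open Matrix

noncomputable def complexNegOnePow (m : ℤ) : ℂˣ :=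
  m.negOnePow.map (Int.castRingHom ℂ).toMonoidHom

lemma val_complexNegOnePow (m : ℤ) :
    (complexNegOnePow m : ℂ) = Complex.exp (Real.pi * Complex.I * m) := by
  rw [mul_comm, Complex.exp_int_mul, Complex.exp_pi_mul_I, ← Int.cast_negOnePow]
  rfl

@[simp]
lemma complexNegOnePow_zero : complexNegOnePow 0 = 1 := by
  simp [complexNegOnePow]

lemma complexNegOnePow_add (m k : ℤ) :
    complexNegOnePow (m + k) = complexNegOnePow m * complexNegOnePow k := by
  simp only [complexNegOnePow, Int.negOnePow_add, map_mul]

lemma complexNegOnePow_mul_self (m : ℤ) : complexNegOnePow m * complexNegOnePow m = 1 := by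
  rw [complexNegOnePow, ← map_mul, Int.units_mul_self, map_one]

lemma complexNegOnePow_eq_of_even_sub {m k : ℤ} (h : Even (m - k)) :
    complexNegOnePow m = complexNegOnePow k := by
  rw [complexNegOnePow, complexNegOnePow, (Int.negOnePow_eq_iff m k).mpr h]

lemma IsCoprime.odd_add_sq_add_mul {a b : ℤ} (h : IsCoprime a b) : Odd ((a + b) ^ 2 + a * b) := by
  rcases Int.even_or_odd a with ha | ha <;> rcases Int.even_or_odd b with hb | hb
  · have := h.isUnit_of_dvd' ha.two_dvd hb.two_dvd
    norm_num [Int.isUnit_iff] at this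
  all_goals
    simp only [← Int.not_even_iff_odd, Int.even_add, Int.even_mul, Int.even_pow] at ha hb ⊢
  all_goals simp [ha, hb]

/-- `hT` and `hS` are the compatibility conditions for the generators `[[1,1],[0,1]]` and
`[[0,-1],[1,0]]` of `SL(2, ℤ)`. -/
theorem apply_eq_mul_of_shear_of_rotation {A M : Type*} [AddCommGroup A] [CommGroup M]
    (χ : A × A → M) (hχ : ∀ v w, χ (v + w) = χ v * χ w) (ψ : A → M) (hψ : ∀ x, ψ x * ψ x = 1)
    (hT : ∀ x, χ (x, 0) = χ (x, x) * ψ x) (hS : ∀ x, χ (x, 0) = χ (0, -x)) (x y : A) :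
    χ (x, y) = ψ x * ψ y := by
  have hsplit : ∀ x y : A, χ (x, y) = χ (x, 0) * χ (0, y) := fun x y => by
    rw [← hχ, Prod.mk_add_mk, add_zero, zero_add]
  have h0 : χ 0 = 1 := left_eq_mul.mp (by rw [← hχ 0 0, add_zero])
  have hψ_inv : ∀ x, (ψ x)⁻¹ = ψ x := fun x => inv_eq_of_mul_eq_one_left (hψ x)
  have hsnd : ∀ x, χ (0, x) = ψ x := fun x => by
    have h := hT x
    rw [hsplit x x, mul_assoc, left_eq_mul] at h
    rw [eq_inv_of_mul_eq_one_left h, hψ_inv]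
  have hfst : ∀ x, χ (x, 0) = ψ x := fun x => by
    have h : χ (0, -x) * χ (0, x) = 1 := by
      rw [← hχ, Prod.mk_add_mk, add_zero, neg_add_cancel, ← h0]
      rfl
    rw [hS, eq_inv_of_mul_eq_one_left h, hsnd, hψ_inv]
  rw [hsplit, hfst, hsnd]

namespace Matrix.IsSymm

variable {n R : Type*} [Fintype n]

lemma dotProduct_mulVec_comm [CommSemiring R] {G : Matrix n n R} (hG : G.IsSymm) (x y : n → R) :
    y ⬝ᵥ G *ᵥ x = x ⬝ᵥ G *ᵥ y := by
  rw [dotProduct_mulVec, ← mulVec_transpose, hG.eq, dotProduct_comm]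

lemma dotProduct_mulVec_smul_add_smul [CommRing R] {G : Matrix n n R} (hG : G.IsSymm)
    (p q : R) (x y : n → R) :
    (p • x + q • y) ⬝ᵥ G *ᵥ (p • x + q • y) =
      p ^ 2 * (x ⬝ᵥ G *ᵥ x) + q ^ 2 * (y ⬝ᵥ G *ᵥ y) + 2 * p * q * (x ⬝ᵥ G *ᵥ y) := by
  simp only [mulVec_add, mulVec_smul, dotProduct_add, add_dotProduct, dotProduct_smul,
    smul_dotProduct, smul_eq_mul, hG.dotProduct_mulVec_comm x y]
  ring

lemma dotProduct_mulVec_add [CommRing R] {G : Matrix n n R} (hG : G.IsSymm) (x y : n → R) :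
    (x + y) ⬝ᵥ G *ᵥ (x + y) = x ⬝ᵥ G *ᵥ x + y ⬝ᵥ G *ᵥ y + 2 * (x ⬝ᵥ G *ᵥ y) := by
  simpa using hG.dotProduct_mulVec_smul_add_smul 1 1 x y

variable {G : Matrix n n ℤ}

lemma even_dotProduct_mulVec_add_sub (hG : G.IsSymm) (x y : n → ℤ) :
    Even ((x + y) ⬝ᵥ G *ᵥ (x + y) - (x ⬝ᵥ G *ᵥ x + y ⬝ᵥ G *ᵥ y)) :=
  ⟨x ⬝ᵥ G *ᵥ y, by rw [hG.dotProduct_mulVec_add]; ring⟩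

lemma even_dotProduct_mulVec_sub_of_det_eq_one (hG : G.IsSymm) (x y : n → ℤ) {a b c d : ℤ}
    (hdet : a * d - b * c = 1) :
    Even ((x + y) ⬝ᵥ G *ᵥ (x + y) -
      ((a • x + c • y) + (b • x + d • y)) ⬝ᵥ G *ᵥ ((a • x + c • y) + (b • x + d • y)) -
      (a * b * (x ⬝ᵥ G *ᵥ x) + c * d * (y ⬝ᵥ G *ᵥ y))) := by
  have hab : IsCoprime a b := ⟨d, -c, by linear_combination hdet⟩
  have hcd : IsCoprime c d := ⟨-b, a, by linear_combination hdet⟩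
  obtain ⟨k, hk⟩ := hab.odd_add_sq_add_mul
  obtain ⟨l, hl⟩ := hcd.odd_add_sq_add_mul
  have hsum : (a • x + c • y) + (b • x + d • y) = (a + b) • x + (c + d) • y := by module
  rw [hsum, hG.dotProduct_mulVec_smul_add_smul, hG.dotProduct_mulVec_add]
  exact ⟨-k * (x ⬝ᵥ G *ᵥ x) - l * (y ⬝ᵥ G *ᵥ y) + (1 - (a + b) * (c + d)) * (x ⬝ᵥ G *ᵥ y), by
    linear_combination (-(x ⬝ᵥ G *ᵥ x)) * hk - (y ⬝ᵥ G *ᵥ y) * hl⟩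

end Matrix.IsSymm

/-- For a nondegenerate symmetric integer matrix `G` with associated
bilinear form `β(x,y) = xᵀGy`, `β(x) = xᵀGx/2`, a homomorphism
`χ : ℤⁿ × ℤⁿ → ℂˣ` satisfies the `SL(2,ℤ)`-compatibility condition
`χ(x,y) = χ(ax+cy, bx+dy)·e(ab·β(x) + cd·β(y))` for all `x, y` and all
`[[a,b],[c,d]] ∈ SL(2,ℤ)` if and only if `χ(x,y) = e(β(x+y))`. -/
theorem character_compatible_with_SL2_iff
    {n : ℕ} (G : Matrix (Fin n) (Fin n) ℤ) (hG : G.IsSymm)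
    (χ : (Fin n → ℤ) × (Fin n → ℤ) → ℂˣ)
    (hχ : ∀ v w : (Fin n → ℤ) × (Fin n → ℤ), χ (v + w) = χ v * χ w) :
    (∀ (x y : Fin n → ℤ) (a b c d : ℤ), a * d - b * c = 1 →
        (χ (x, y) : ℂ) =
          (χ (a • x + c • y, b • x + d • y) : ℂ) *
            Complex.exp ((Real.pi : ℂ) * Complex.I *
              (((a * b * (x ⬝ᵥ G.mulVec x) + c * d * (y ⬝ᵥ G.mulVec y)) : ℤ) : ℂ)))
      ↔
    (∀ x y : Fin n → ℤ,
        (χ (x, y) : ℂ) =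
          Complex.exp ((Real.pi : ℂ) * Complex.I *
            ((((x + y) ⬝ᵥ G.mulVec (x + y)) : ℤ) : ℂ))) := by
  simp only [← val_complexNegOnePow, ← Units.val_mul, Units.val_inj]
  constructor
  · intro h x y
    have hT := fun x => by simpa using h x 0 1 1 0 1 (by norm_num)
    have hS := fun x => by simpa using h x 0 0 (-1) 1 0 (by norm_num)
    rw [apply_eq_mul_of_shear_of_rotation χ hχ (fun x => complexNegOnePow (x ⬝ᵥ G *ᵥ x))
      (fun x => complexNegOnePow_mul_self _) hT hS, ← complexNegOnePow_add]
    exact complexNegOnePow_eq_of_even_sub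
      (by simpa using (hG.even_dotProduct_mulVec_add_sub x y).neg)
  · intro h x y a b c d hdet
    rw [h, h, ← complexNegOnePow_add]
    exact complexNegOnePow_eq_of_even_sub
      (by simpa [sub_sub] using hG.even_dotProduct_mulVec_sub_of_det_eq_one x y hdet)
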